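/- arXiv:1611.06506 — 2 statements merged into one kernel-verified Lean document; each statement's English description precedes it below -/
import Mathlib

section
/- For the functional equation Y = X(1-Y)^τ(1-a(1-Y)) with Y(0)=0, the formal power series solution satisfies log(1 - Y(X)) = Σ_{n≥1} (X^n/n) Σ_{i≥0} (-1)^{n+i} C(n,i) C(nτ+i-1, n-1) a^i, as formal power series in X with coefficients polynomials in a (and τ an integer). -/
open PowerSeries

/-- Binomial coefficient `C(n,k)` with integer upper argument, extended to
negative `n` via `C(n,k) = (-1)^k * C(-n+k-1, k)`. -/
def ichoose (n : ℤ) (k : ℕ) : ℤ :=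
  if 0 ≤ n then ((n.toNat).choose k : ℤ)
  else (-1) ^ k * (((-n + k - 1).toNat).choose k : ℤ)

/-- The formal logarithm `log F = Σ_{k≥1} (-1)^{k+1} (F-1)^k / k` of a power
series `F` (with constant term 1). -/
noncomputable def plog (F : PowerSeries (Polynomial ℚ)) : PowerSeries (Polynomial ℚ) :=
  PowerSeries.mk fun n =>
    ∑ k ∈ Finset.range (n + 1),
      Polynomial.C ((-1 : ℚ) ^ (k + 1) / k) * PowerSeries.coeff (R := Polynomial ℚ) n ((F - 1) ^ k)

/-! By Lagrange inversion, if `Y = X φ(Y)` with `φ(0)` invertible then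
`(n+1) [X^{n+1}] H(Y) = [X^n] H' φ^{n+1}`; the key point is that `[X^n] Y^m Y' (X/Y)^{n+1}`,
the residue of `Y^{m-n-1} dY`, is `δ_{mn}`. Take `H = log (1 - X)`, so `H' = -(1-X)^{-1}`, and
`φ = (1-X)^τ (1 - a(1-X))`. Expanding `(1 - a(1-X))^{n+1}` binomially leaves the coefficients
of `(1-X)^{(n+1)τ + i - 1}`, which are generalized binomial coefficients. Since `φ(0) = 1 - a`
is not a unit of `ℚ[a]`, the computation is carried out over `ℚ(a)`. -/

namespace PowerSeries

section Substitution

variable {R : Type*} [CommRing R]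

theorem derivative_X_mul (U : R⟦X⟧) : d⁄dX R (X * U) = U + X * d⁄dX R U := by
  rw [Derivation.leibniz, derivative_X, smul_eq_mul, smul_eq_mul]
  ring

theorem constantCoeff_subst_of_constantCoeff_eq_zero {Y : R⟦X⟧} (hY : constantCoeff Y = 0)
    (φ : R⟦X⟧) : constantCoeff (φ.subst Y) = constantCoeff φ := by
  have h := constantCoeff_subst_eq_zero hY (φ - C (constantCoeff φ)) (by simp)
  rwa [subst_sub (HasSubst.of_constantCoeff_zero' hY), subst_C, map_sub, sub_eq_zero] at h

end Substitution

section LagrangeInversion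

variable {K : Type*} [Field K] [CharZero K]

theorem coeff_derivative_X_mul_mul_inv_pow {U : K⟦X⟧} (hU : constantCoeff U ≠ 0) (r : ℕ) :
    coeff r (d⁄dX K (X * U) * U⁻¹ ^ (r + 1)) = if r = 0 then 1 else 0 := by
  have hUV : U * U⁻¹ = 1 := PowerSeries.mul_inv_cancel U hU
  rcases r with _ | s
  · have h : d⁄dX K (X * U) * U⁻¹ ^ 1 = 1 + X * (d⁄dX K U * U⁻¹) := by
      rw [derivative_X_mul]
      linear_combination hUV
    rw [h, map_add, coeff_zero_X_mul]
    simp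
  -- for `r = s + 1` the series is `V^r - X V^{r-1} V'` with `V = U⁻¹`, and
  -- `[X^r] (X V^{r-1} V') = [X^{r-1}] (V^r)' / r = [X^r] V^r`.
  · have h : d⁄dX K (X * U) * U⁻¹ ^ (s + 2) = U⁻¹ ^ (s + 1) - X * (U⁻¹ ^ s * d⁄dX K U⁻¹) := by
      rw [derivative_X_mul]
      linear_combination U⁻¹ ^ (s + 1) * hUV + X * U⁻¹ ^ s * derivative_inv' U
    have hpow := coeff_derivative (U⁻¹ ^ (s + 1)) s
    rw [derivative_pow, Nat.add_sub_cancel, mul_assoc, ← map_natCast (C (R := K)),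
      coeff_C_mul] at hpow
    rw [h, map_sub, coeff_succ_X_mul, if_neg s.succ_ne_zero, sub_eq_zero]
    refine mul_left_cancel₀ (Nat.cast_ne_zero.mpr s.succ_ne_zero : ((s + 1 : ℕ) : K) ≠ 0) ?_
    rw [hpow]
    push_cast
    ring

theorem coeff_X_mul_pow_mul_derivative_mul_inv_pow {U : K⟦X⟧} (hU : constantCoeff U ≠ 0)
    (m n : ℕ) :
    coeff n ((X * U) ^ m * (d⁄dX K (X * U) * U⁻¹ ^ (n + 1))) = if m = n then 1 else 0 := by
  rcases le_or_gt m n with hmn | hnm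
  · obtain ⟨r, rfl⟩ := Nat.exists_eq_add_of_le hmn
    have hUV : (U * U⁻¹) ^ m = 1 := by rw [PowerSeries.mul_inv_cancel U hU, one_pow]
    have h : (X * U) ^ m * (d⁄dX K (X * U) * U⁻¹ ^ (m + r + 1))
        = X ^ m * (d⁄dX K (X * U) * U⁻¹ ^ (r + 1)) := by
      linear_combination X ^ m * d⁄dX K (X * U) * U⁻¹ ^ (r + 1) * hUV
    rw [h, coeff_X_pow_mul', if_pos hmn, Nat.add_sub_cancel_left,
      coeff_derivative_X_mul_mul_inv_pow hU]
    simp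
  · rw [mul_pow, mul_assoc, coeff_X_pow_mul', if_neg (by omega), if_neg (by omega)]

theorem coeff_subst_X_mul_mul_derivative_mul_inv_pow {U : K⟦X⟧} (hU : constantCoeff U ≠ 0)
    (P : K⟦X⟧) (n : ℕ) :
    coeff n (P.subst (X * U) * (d⁄dX K (X * U) * U⁻¹ ^ (n + 1))) = coeff n P := by
  have hS : HasSubst (X * U) := HasSubst.of_constantCoeff_zero' (by simp)
  have hsplit : P.subst (X * U) = X ^ (n + 1) * (U ^ (n + 1) *
      (mk fun i => coeff (i + (n + 1)) P).subst (X * U)) +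
        Polynomial.aeval (X * U) (trunc (n + 1) P) := by
    conv_lhs => rw [eq_X_pow_mul_shift_add_trunc (n + 1) P]
    rw [subst_add hS, subst_mul hS, subst_pow hS, subst_X hS, subst_coe hS, mul_pow, mul_assoc]
  rw [hsplit, add_mul, map_add, mul_assoc, coeff_X_pow_mul', if_neg (by omega), zero_add,
    Polynomial.aeval_eq_sum_range' (natDegree_trunc_lt P n), Finset.sum_mul, map_sum]
  simp_rw [smul_mul_assoc, coeff_smul, coeff_X_mul_pow_mul_derivative_mul_inv_pow hU]
  simp [coeff_trunc]

theorem lagrange_inversion {φ Y : K⟦X⟧} (hφ : constantCoeff φ ≠ 0) (hY : Y = X * φ.subst Y)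
    (H : K⟦X⟧) (n : ℕ) :
    (n + 1) * coeff (n + 1) (H.subst Y) = coeff n (d⁄dX K H * φ ^ (n + 1)) := by
  have hY0 : constantCoeff Y = 0 := by rw [hY]; simp
  have hS : HasSubst Y := HasSubst.of_constantCoeff_zero' hY0
  set U := φ.subst Y with hU
  have hU0 : constantCoeff U ≠ 0 := by
    rwa [hU, constantCoeff_subst_of_constantCoeff_eq_zero hY0]
  have hUV : (U * U⁻¹) ^ (n + 1) = 1 := by rw [PowerSeries.mul_inv_cancel U hU0, one_pow]
  have hres := coeff_subst_X_mul_mul_derivative_mul_inv_pow hU0 (d⁄dX K H * φ ^ (n + 1)) n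
  rw [← hY, subst_mul hS, subst_pow hS, ← hU] at hres
  have hchain : (d⁄dX K H).subst Y * U ^ (n + 1) * (d⁄dX K Y * U⁻¹ ^ (n + 1))
      = d⁄dX K (H.subst Y) := by
    rw [derivative_subst hS]
    linear_combination (d⁄dX K H).subst Y * d⁄dX K Y * hUV
  rw [← hres, hchain, coeff_derivative]
  ring

end LagrangeInversion

section Binomial

variable (A : Type*) [CommRing A]

noncomputable def oneSubXZPow (r : ℤ) : A⟦X⟧ := rescale (-1) (binomialSeries A r)

variable {A}

theorem oneSubXZPow_add (r s : ℤ) :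
    oneSubXZPow A (r + s) = oneSubXZPow A r * oneSubXZPow A s := by
  rw [oneSubXZPow, binomialSeries_add, map_mul]
  rfl

theorem oneSubXZPow_natCast (n : ℕ) : oneSubXZPow A n = (1 - X) ^ n := by
  rw [oneSubXZPow, binomialSeries_nat, map_pow, map_add, map_one, rescale_X, map_neg, map_one,
    neg_one_mul, ← sub_eq_add_neg]

theorem oneSubXZPow_mul (n : ℕ) (r : ℤ) : oneSubXZPow A (n * r) = oneSubXZPow A r ^ n := by
  induction n with
  | zero => simpa using oneSubXZPow_natCast (A := A) 0
  | succ n ih => rw [Nat.cast_succ, add_one_mul, oneSubXZPow_add, ih, pow_succ]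

theorem coeff_oneSubXZPow (r : ℤ) (j : ℕ) :
    coeff j (oneSubXZPow A r) = (-1) ^ j * Ring.choose r j := by
  rw [oneSubXZPow, coeff_rescale, binomialSeries_coeff, Int.smul_one_eq_cast]

theorem constantCoeff_oneSubXZPow (r : ℤ) : constantCoeff (oneSubXZPow A r) = 1 := by
  rw [← coeff_zero_eq_constantCoeff_apply, coeff_oneSubXZPow, Ring.choose_zero_right]
  simp

theorem coeff_oneSubXZPow_mul_pow (a : A) (s : ℤ) (m n : ℕ) :
    coeff n (oneSubXZPow A s * (1 - C a * (1 - X)) ^ m) =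
      ∑ i ∈ Finset.range (m + 1), (-a) ^ i * m.choose i * ((-1) ^ n * Ring.choose (s + i) n) := by
  have hexp : oneSubXZPow A s * (1 - C a * (1 - X)) ^ m =
      ∑ i ∈ Finset.range (m + 1), C ((-a) ^ i * m.choose i) * oneSubXZPow A (s + i) := by
    rw [sub_eq_neg_add, add_pow, Finset.mul_sum]
    refine Finset.sum_congr rfl fun i _ => ?_
    rw [oneSubXZPow_add, oneSubXZPow_natCast, ← neg_mul, ← map_neg, mul_pow, ← map_pow, one_pow,
      mul_one, map_mul, map_natCast]
    ring
  simp_rw [hexp, map_sum, coeff_C_mul, coeff_oneSubXZPow]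

theorem derivative_log_eq_binomialSeries [Algebra ℚ A] :
    d⁄dX A (log A) = binomialSeries A (-1 : ℤ) := by
  ext n
  have h : Ring.choose (-1 : ℤ) n = (-1) ^ n := by
    rw [Ring.choose_neg, add_sub_cancel_left, Ring.choose_natCast, Nat.choose_self, Nat.cast_one,
      Units.smul_def, smul_eq_mul, mul_one, Int.coe_negOnePow_natCast]
  rw [deriv_log, coeff_mk, binomialSeries_coeff, h, Int.smul_one_eq_cast]
  simp

theorem derivative_logOf_one_sub_X [Algebra ℚ A] :
    d⁄dX A (logOf (1 - X : A⟦X⟧)) = -oneSubXZPow A (-1) := by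
  have hS : HasSubst (-X : A⟦X⟧) := HasSubst.of_constantCoeff_zero' (by simp)
  rw [logOf_eq, sub_sub_cancel_left, derivative_subst hS, derivative_log_eq_binomialSeries,
    oneSubXZPow, rescale_eq_subst, neg_one_smul, map_neg, derivative_X, mul_neg_one]

end Binomial

section Logarithm

variable {A : Type*} [CommRing A] [Algebra ℚ A]

theorem map_logOf {A' : Type*} [CommRing A'] [Algebra ℚ A'] (f : A →+* A') {F : A⟦X⟧}
    (hF : constantCoeff F = 1) : map f (logOf F) = logOf (map f F) := by
  rw [logOf_eq, logOf_eq, ← map_log f, ← map_one (map f), ← map_sub]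
  exact map_subst (HasSubst.of_constantCoeff_zero' (by simp [hF])) _

theorem logOf_one_sub_eq_subst {Y : A⟦X⟧} (hY : HasSubst Y) :
    logOf (1 - Y) = (logOf (1 - X : A⟦X⟧)).subst Y := by
  have hX : HasSubst (-X : A⟦X⟧) := HasSubst.of_constantCoeff_zero' (by simp)
  rw [logOf_eq, logOf_eq, sub_sub_cancel_left, sub_sub_cancel_left,
    subst_comp_subst_apply hX hY, ← coe_substAlgHom hY, map_neg, coe_substAlgHom, subst_X hY]

end Logarithm

section FunctionalEquation

theorem eq_X_mul_subst_of_mul_pow_eq {R : Type*} [CommRing R] [IsDomain R] {τ : ℤ} {a : R}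
    {Y : R⟦X⟧} (hY0 : constantCoeff Y = 0)
    (hY : Y * (1 - Y) ^ (-τ).toNat = X * (1 - Y) ^ τ.toNat * (1 - C a * (1 - Y))) :
    Y = X * (oneSubXZPow R τ * (1 - C a * (1 - X))).subst Y := by
  have hS : HasSubst Y := HasSubst.of_constantCoeff_zero' hY0
  have hsub : (1 - X : R⟦X⟧).subst Y = 1 - Y := by
    rw [← coe_substAlgHom hS, map_sub, map_one, substAlgHom_X]
  have hτ : (oneSubXZPow R τ).subst Y * (1 - Y) ^ (-τ).toNat = (1 - Y) ^ τ.toNat := by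
    rw [← hsub, ← subst_pow hS, ← subst_pow hS, ← subst_mul hS, ← oneSubXZPow_natCast,
      ← oneSubXZPow_natCast, ← oneSubXZPow_add, show τ + ((-τ).toNat : ℤ) = τ.toNat by omega]
  have hZ : (1 - Y) ^ (-τ).toNat ≠ 0 := pow_ne_zero _ fun h => by
    simpa [hY0] using congrArg constantCoeff h
  refine mul_right_cancel₀ hZ ?_
  rw [hY, ← coe_substAlgHom hS, map_mul, map_sub, map_one, map_mul, coe_substAlgHom, hsub,
    show (C a : R⟦X⟧).subst Y = C a from subst_C a]
  linear_combination (-X * (1 - C a * (1 - Y))) * hτ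

variable {K : Type*} [Field K] [CharZero K]

theorem coeff_logOf_one_sub_of_eq_X_mul_subst {τ : ℤ} {a : K} (ha : a ≠ 1) {Y : K⟦X⟧}
    (hY : Y = X * (oneSubXZPow K τ * (1 - C a * (1 - X))).subst Y) (n : ℕ) :
    (n + 1) * coeff (n + 1) (logOf (1 - Y)) =
      ∑ i ∈ Finset.range (n + 2), (-1) ^ (n + 1 + i) * ((n + 1).choose i : K) *
        ((Ring.choose (((n + 1 : ℕ) : ℤ) * τ + i - 1) n : ℤ) : K) * a ^ i := by
  have hY0 : constantCoeff Y = 0 := by rw [hY]; simp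
  have hφ : constantCoeff (oneSubXZPow K τ * (1 - C a * (1 - X))) ≠ 0 := by
    rw [map_mul, map_sub, map_one, map_mul, constantCoeff_C, map_sub, map_one, constantCoeff_X,
      constantCoeff_oneSubXZPow, sub_zero, mul_one, one_mul, sub_ne_zero]
    exact ha.symm
  rw [logOf_one_sub_eq_subst (HasSubst.of_constantCoeff_zero' hY0), lagrange_inversion hφ hY,
    derivative_logOf_one_sub_X, mul_pow, ← oneSubXZPow_mul, neg_mul, ← mul_assoc,
    ← oneSubXZPow_add, map_neg, coeff_oneSubXZPow_mul_pow, ← Finset.sum_neg_distrib]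
  refine Finset.sum_congr rfl fun i _ => ?_
  rw [show -1 + ((n + 1 : ℕ) : ℤ) * τ + i = ((n + 1 : ℕ) : ℤ) * τ + i - 1 by ring]
  ring

end FunctionalEquation

end PowerSeries

theorem RatFunc.X_ne_one {K : Type*} [CommRing K] [IsDomain K] : (X : RatFunc K) ≠ 1 := by
  rw [← algebraMap_X, ← map_one (algebraMap (Polynomial K) (RatFunc K)),
    (algebraMap_injective K).ne_iff]
  intro h
  simpa using congrArg Polynomial.natDegree h

theorem ichoose_eq_ringChoose (n : ℤ) (k : ℕ) : ichoose n k = Ring.choose n k := by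
  unfold ichoose
  split_ifs with hn
  · rw [← Ring.choose_natCast, Int.toNat_of_nonneg hn]
  · rw [← neg_neg n, Ring.choose_neg, Units.smul_def, Int.coe_negOnePow_natCast, smul_eq_mul,
      ← Ring.choose_natCast, Int.toNat_of_nonneg (by omega), neg_neg]

theorem plog_eq_logOf {F : PowerSeries (Polynomial ℚ)} (hF : constantCoeff F = 1) :
    plog F = logOf F := by
  have hF1 : constantCoeff (F - 1) = 0 := by simp [hF]
  obtain ⟨G, hG⟩ := X_dvd_iff.mpr hF1
  ext n : 1
  have hsupp : (Function.support fun d => coeff d (log (Polynomial ℚ)) • coeff n ((F - 1) ^ d))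
      ⊆ Finset.range (n + 1) := by
    intro k hk
    rw [Finset.coe_range, Set.mem_Iio]
    by_contra h
    rw [Function.mem_support, hG, mul_pow, coeff_X_pow_mul', if_neg (by omega), smul_zero] at hk
    exact hk rfl
  rw [plog, coeff_mk, logOf_eq, coeff_subst' (HasSubst.of_constantCoeff_zero' hF1),
    finsum_eq_sum_of_support_subset _ hsupp]
  refine Finset.sum_congr rfl fun k _ => ?_
  rcases k with _ | k
  · simp
  · rw [coeff_log, if_neg k.succ_ne_zero, smul_eq_mul, Polynomial.algebraMap_eq]

/-- For the solution `Y(X)` (with `Y(0)=0`, coefficients in `ℚ[a]`) of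
`Y = X (1-Y)^τ (1 - a(1-Y))` (stated with denominators cleared so as to make
sense for any integer `τ`), one has
`log(1-Y(X)) = Σ_{n≥1} (X^n/n) Σ_{i≥0} (-1)^{n+i} C(n,i) C(nτ+i-1,n-1) a^i`. -/
theorem stmt11 (τ : ℤ) (Y : PowerSeries (Polynomial ℚ))
    (hY0 : PowerSeries.constantCoeff (R := Polynomial ℚ) Y = 0)
    (hY : Y * (1 - Y) ^ ((-τ).toNat) =
      PowerSeries.X * (1 - Y) ^ (τ.toNat) *
        (1 - PowerSeries.C (R := Polynomial ℚ) Polynomial.X * (1 - Y))) :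
    plog (1 - Y) =
      PowerSeries.mk (fun n => if n = 0 then 0 else
        ∑ i ∈ Finset.range (n + 1),
          Polynomial.C (((-1 : ℚ) ^ (n + i) * (ichoose (n : ℤ) i : ℚ) *
              (ichoose ((n : ℤ) * τ + i - 1) (n - 1) : ℚ)) / n) *
            Polynomial.X ^ i) := by
  set ι := algebraMap (Polynomial ℚ) (RatFunc ℚ)
  have hι : Function.Injective ι := RatFunc.algebraMap_injective ℚ
  have hιC (q : ℚ) : ι (Polynomial.C q) = q := eq_ratCast (ι.comp Polynomial.C) q
  have hιX : ι Polynomial.X = RatFunc.X := RatFunc.algebraMap_X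
  have hF : constantCoeff (1 - Y) = 1 := by simp [hY0]
  have hYK0 : constantCoeff (map ι Y) = 0 := by
    rw [← coeff_zero_eq_constantCoeff_apply, coeff_map, coeff_zero_eq_constantCoeff_apply, hY0,
      map_zero]
  have hYK : map ι Y =
      X * (oneSubXZPow (RatFunc ℚ) τ * (1 - C RatFunc.X * (1 - X))).subst (map ι Y) := by
    refine eq_X_mul_subst_of_mul_pow_eq hYK0 ?_
    simpa [hιX] using congrArg (map ι) hY
  ext n : 1
  apply hι
  rw [plog_eq_logOf hF, ← coeff_map, map_logOf ι hF, map_sub, map_one, coeff_mk]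
  rcases n with _ | n
  · simpa using constantCoeff_logOf (by simp [hYK0])
  · have hn : ((n : RatFunc ℚ) + 1) ≠ 0 := by exact_mod_cast n.succ_ne_zero
    rw [if_neg n.succ_ne_zero, ← mul_right_inj' hn,
      coeff_logOf_one_sub_of_eq_X_mul_subst RatFunc.X_ne_one hYK n, map_sum, Finset.mul_sum]
    refine Finset.sum_congr rfl fun i _ => ?_
    rw [map_mul, map_pow, hιX, hιC, ichoose_eq_ringChoose,
      ichoose_eq_ringChoose, Ring.choose_natCast, Nat.add_sub_cancel]
    simp only [Rat.cast_div, Rat.cast_mul, Rat.cast_pow, Rat.cast_neg, Rat.cast_one,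
      Rat.cast_intCast, Int.cast_natCast, Rat.cast_natCast, Nat.cast_succ, Rat.cast_add]
    field_simp
end

section
/- For p ≤ -1 and every r ≥ 1, the number b⁻_{K_p,r} = -(1/r²) Σ_{d|r} μ(r/d) C(3d-1, d-1) is an integer, and b⁺_{K_p,r} = (1/r²) Σ_{d|r} μ(r/d) C((2|p|+1)d - 1, d-1) is an integer. -/
/-!
Fix `k` odd and put `a n = C(k n - 1, n - 1)`. Only the divisors `d` with `r / d` squarefree
contribute to the Möbius sum; for a prime `p` with `p ^ α ∥ r` they pair up as `y p ^ α`,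
`y p ^ (α - 1)`, so it suffices that `p ^ (2 j) ∣ a (m p ^ j) - a (m p ^ (j - 1))`.

For this congruence put `N = n p`. In `C(k N - 1, N - 1) = ∏_{0 < i < N} (k N - i) / i` the
factors with `p ∣ i` make up `C(k n - 1, n - 1)`; the others give `W / U`, where
`U = ∏_{i ∈ S} i`, `W = ∏_{i ∈ S} (k N - i)` and `S` is the set of `0 < i < N` prime to `p`.
For `P = ∏_{i ∈ S} (X - i)`, Taylor expansion at `0` gives `P (k N) ≡ P 0 + k (P N - P 0)`
modulo `N²`, and the symmetry `i ↦ N - i` of `S` gives `P N = U = (-1) ^ |S| P 0`. Now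
`|S| = n (p - 1)` is even unless `p = 2` and `n` is odd, and then the oddness of `k` repairs the
sign modulo `4`.
-/

open Finset ArithmeticFunction Polynomial
open scoped ArithmeticFunction.Moebius

lemma Polynomial.sq_dvd_eval_mul_sub {R : Type*} [CommRing R] (P : R[X]) (k N : R) :
    N ^ 2 ∣ P.eval (k * N) - P.eval 0 - k * (P.eval N - P.eval 0) := by
  obtain ⟨a, ha⟩ := P.binomExpansion 0 (k * N)
  obtain ⟨b, hb⟩ := P.binomExpansion 0 N
  rw [zero_add] at ha hb
  rw [ha, hb]
  exact ⟨a * k ^ 2 - k * b, by ring⟩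

lemma sq_dvd_prod_mul_sub_sub {ι R : Type*} [CommRing R] (s : Finset ι) (g : ι → R) (k N : R)
    (hreflect : ∏ i ∈ s, (N - g i) = ∏ i ∈ s, g i) :
    N ^ 2 ∣ ∏ i ∈ s, (k * N - g i) - (k + (1 - k) * (-1) ^ #s) * ∏ i ∈ s, g i := by
  have h := (∏ i ∈ s, (X - C (g i))).sq_dvd_eval_mul_sub k N
  simp only [eval_prod, eval_sub, eval_X, eval_C, zero_sub, prod_neg, hreflect] at h
  convert h using 1
  ring

def nonMultiples (p N : ℕ) : Finset ℕ := (Ico 1 N).filter (fun i => ¬ p ∣ i)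

lemma mem_nonMultiples {p N i : ℕ} :
    i ∈ nonMultiples p N ↔ 1 ≤ i ∧ i < N ∧ ¬ p ∣ i := by
  simp [nonMultiples, and_assoc]

lemma prod_nonMultiples_sub {R : Type*} [CommRing R] {p N : ℕ} (hpN : p ∣ N) :
    ∏ i ∈ nonMultiples p N, ((N : R) - i) = ∏ i ∈ nonMultiples p N, (i : R) := by
  have hmem : ∀ i ∈ nonMultiples p N, N - i ∈ nonMultiples p N := by
    intro i hi
    obtain ⟨h1, h2, h3⟩ := mem_nonMultiples.1 hi
    refine mem_nonMultiples.2 ⟨by omega, by omega, fun h => h3 ?_⟩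
    simpa [Nat.sub_sub_self h2.le] using Nat.dvd_sub hpN h
  refine prod_nbij' (N - ·) (N - ·) hmem hmem
    (fun i hi => ?_) (fun i hi => ?_) (fun i hi => ?_)
  all_goals have := (mem_nonMultiples.1 hi).2.1
  · omega
  · omega
  · rw [Nat.cast_sub this.le]

lemma Ico_filter_dvd_eq_image {p : ℕ} (hp : 0 < p) (n : ℕ) :
    (Ico 1 (n * p)).filter (p ∣ ·) = (Ico 1 n).image (p * ·) := by
  ext i
  simp only [mem_filter, mem_Ico, mem_image]
  constructor
  · rintro ⟨⟨h1, h2⟩, j, rfl⟩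
    refine ⟨j, ⟨Nat.pos_of_ne_zero (by rintro rfl; simp at h1), ?_⟩, rfl⟩
    rw [mul_comm n] at h2
    exact Nat.lt_of_mul_lt_mul_left h2
  · rintro ⟨j, ⟨hj1, hj2⟩, rfl⟩
    refine ⟨⟨Nat.mul_pos hp hj1, ?_⟩, dvd_mul_right p j⟩
    rw [mul_comm n]
    exact Nat.mul_lt_mul_of_pos_left hj2 hp

lemma prod_Ico_eq_prod_nonMultiples_mul {M : Type*} [CommMonoid M] {p : ℕ} (hp : 0 < p)
    (n : ℕ) (f : ℕ → M) :
    ∏ i ∈ Ico 1 (n * p), f i =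
      (∏ i ∈ nonMultiples p (n * p), f i) * ∏ j ∈ Ico 1 n, f (p * j) := by
  rw [← prod_filter_not_mul_prod_filter _ (p ∣ ·), Ico_filter_dvd_eq_image hp,
    prod_image fun a _ b _ h => Nat.eq_of_mul_eq_mul_left hp h]
  rfl

lemma card_nonMultiples {p : ℕ} (hp : 0 < p) (n : ℕ) :
    #(nonMultiples p (n * p)) = n * (p - 1) := by
  have hsplit :
      #((Ico 1 (n * p)).filter (p ∣ ·)) + #(nonMultiples p (n * p)) = #(Ico 1 (n * p)) :=
    card_filter_add_card_filter_not _
  rw [Ico_filter_dvd_eq_image hp, card_image_of_injective _ fun a b h =>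
    Nat.eq_of_mul_eq_mul_left hp h, Nat.card_Ico, Nat.card_Ico] at hsplit
  rw [Nat.mul_sub_one]
  rcases n.eq_zero_or_pos with rfl | hn
  · simp [nonMultiples]
  · have : n ≤ n * p := Nat.le_mul_of_pos_right n hp
    generalize n * p = N at *
    omega

lemma prime_eq_two_and_eq_zero_of_odd_card_nonMultiples {p : ℕ} (hp : p.Prime) {m j : ℕ}
    (hodd : Odd #(nonMultiples p (m * p ^ j * p))) : p = 2 ∧ j = 0 := by
  rw [card_nonMultiples hp.pos, Nat.odd_mul, Nat.odd_mul, Nat.odd_sub hp.one_le] at hodd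
  obtain ⟨⟨-, hpj⟩, hp1⟩ := hodd
  obtain rfl : p = 2 := hp.eq_two_or_odd'.resolve_right fun h => by simpa using hp1.1 h
  refine ⟨rfl, by_contra fun hj => ?_⟩
  exact Nat.not_even_iff_odd.2 hpj (even_two.pow_of_ne_zero hj)

lemma choose_pred_mul_prod_Ico (m t : ℕ) :
    (m - 1).choose (t - 1) * ∏ i ∈ Ico 1 t, i = ∏ i ∈ Ico 1 t, (m - i) := by
  rcases t with _ | t
  · simp
  · rw [prod_Ico_id_eq_factorial, Nat.add_sub_cancel, mul_comm,
      ← Nat.descFactorial_eq_factorial_mul_choose, Nat.descFactorial_eq_prod_range,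
      prod_Ico_eq_prod_range, Nat.add_sub_cancel]
    exact prod_congr rfl fun i _ => by omega

lemma choose_mul_prod_nonMultiples {p : ℕ} (hp : 0 < p) (k n : ℕ) :
    (k * (n * p) - 1).choose (n * p - 1) * ∏ i ∈ nonMultiples p (n * p), i =
      (k * n - 1).choose (n - 1) * ∏ i ∈ nonMultiples p (n * p), (k * (n * p) - i) := by
  have hmultiples :
      ∏ j ∈ Ico 1 n, (k * (n * p) - p * j) = p ^ (n - 1) * ∏ j ∈ Ico 1 n, (k * n - j) := by
    rw [← Nat.card_Ico 1 n, ← prod_const, ← prod_mul_distrib]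
    exact prod_congr rfl fun j _ => by rw [Nat.mul_sub, show k * (n * p) = p * (k * n) by ring]
  have hpos : 0 < p ^ (n - 1) * ∏ j ∈ Ico 1 n, j :=
    Nat.mul_pos (pow_pos hp _) (prod_pos fun j hj => (mem_Ico.1 hj).1)
  apply Nat.eq_of_mul_eq_mul_right hpos
  have hA := choose_pred_mul_prod_Ico (k * (n * p)) (n * p)
  have hB := choose_pred_mul_prod_Ico (k * n) n
  rw [prod_Ico_eq_prod_nonMultiples_mul hp, prod_Ico_eq_prod_nonMultiples_mul hp, hmultiples,
    ← hB, prod_mul_distrib, prod_const, Nat.card_Ico] at hA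
  convert hA using 1 <;> ring

lemma isCoprime_prod_nonMultiples {p : ℕ} (hp : p.Prime) (N : ℕ) :
    IsCoprime (p : ℤ) (∏ i ∈ nonMultiples p N, (i : ℤ)) :=
  IsCoprime.prod_right fun _ hi => Nat.isCoprime_iff_coprime.2
    (hp.coprime_iff_not_dvd.2 (mem_nonMultiples.1 hi).2.2)

lemma sq_prime_pow_dvd_choose_sub {p k : ℕ} (hp : p.Prime) (hk : Odd k) (m j : ℕ) :
    ((p : ℤ) ^ (j + 1)) ^ 2 ∣ ((k * (m * p ^ (j + 1)) - 1).choose (m * p ^ (j + 1) - 1) : ℤ) -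
      ((k * (m * p ^ j) - 1).choose (m * p ^ j - 1) : ℤ) := by
  set n := m * p ^ j
  rw [show m * p ^ (j + 1) = n * p by rw [pow_succ, ← mul_assoc]]
  have hk0 : 1 ≤ k := hk.pos
  have hid := congrArg (Nat.cast : ℕ → ℤ) (choose_mul_prod_nonMultiples hp.pos k n)
  push_cast [prod_congr rfl fun i hi => Nat.cast_sub (R := ℤ)
    ((mem_nonMultiples.1 hi).2.1.le.trans (Nat.le_mul_of_pos_left (n * p) hk0))] at hid
  have hN : ((p : ℤ) ^ (j + 1)) ^ 2 ∣ ((n * p : ℕ) : ℤ) ^ 2 := by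
    have h : (p : ℤ) ^ (j + 1) ∣ ((n * p : ℕ) : ℤ) := ⟨m, by push_cast [n]; ring⟩
    exact pow_dvd_pow_of_dvd h 2
  have hW := hN.trans <| sq_dvd_prod_mul_sub_sub (nonMultiples p (n * p)) (fun i => (i : ℤ)) k
    (n * p : ℕ) (prod_nonMultiples_sub (dvd_mul_left p n))
  have hsign :
      ((p : ℤ) ^ (j + 1)) ^ 2 ∣ (k + (1 - k) * (-1) ^ #(nonMultiples p (n * p)) - 1 : ℤ) := by
    rcases Nat.even_or_odd #(nonMultiples p (n * p)) with hS | hS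
    · rw [hS.neg_one_pow, show (k : ℤ) + (1 - k) * 1 - 1 = 0 by ring]
      exact dvd_zero _
    · obtain ⟨rfl, rfl⟩ := prime_eq_two_and_eq_zero_of_odd_card_nonMultiples hp hS
      obtain ⟨t, rfl⟩ := hk
      rw [hS.neg_one_pow]
      exact ⟨t, by push_cast; ring⟩
  have hWU := dvd_add hW (hsign.mul_right (∏ i ∈ nonMultiples p (n * p), (i : ℤ)))
  push_cast at hWU
  refine ((isCoprime_prod_nonMultiples hp (n * p)).pow_left.pow_left).dvd_of_dvd_mul_right ?_
  convert hWU.mul_left ((k * n - 1).choose (n - 1) : ℤ) using 1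
  linear_combination hid

lemma Nat.Coprime.sum_divisors_mul_eq_sum_sum {M : Type*} [AddCommMonoid M] {m n : ℕ}
    (hmn : m.Coprime n) (f : ℕ → M) :
    ∑ d ∈ (m * n).divisors, f d = ∑ x ∈ m.divisors, ∑ y ∈ n.divisors, f (x * y) := by
  rw [Nat.divisors_mul, Finset.mul_def, sum_image hmn.mul_injOn_divisors, sum_product]

lemma sum_range_moebius_prime_pow_mul {p : ℕ} (hp : p.Prime) (j : ℕ) (g : ℕ → ℤ) :
    ∑ β ∈ range (j + 2), μ (p ^ (j + 1 - β)) * g β = g (j + 1) - g j := by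
  rw [sum_range_succ, sum_range_succ, sum_eq_zero fun β hβ => ?_]
  · simp [moebius_apply_prime hp]
    ring
  · have : j + 1 - β ≠ 0 ∧ j + 1 - β ≠ 1 := by have := mem_range.1 hβ; omega
    rw [moebius_apply_prime_pow hp this.1, if_neg this.2, zero_mul]

lemma prime_pow_factorization_sq_dvd_sum_moebius {p : ℕ} (hp : p.Prime) (a : ℕ → ℤ)
    (ha : ∀ m j : ℕ, ((p : ℤ) ^ (j + 1)) ^ 2 ∣ a (m * p ^ (j + 1)) - a (m * p ^ j))
    {r : ℕ} (hr : r ≠ 0) :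
    ((p : ℤ) ^ r.factorization p) ^ 2 ∣ ∑ d ∈ r.divisors, μ (r / d) * a d := by
  obtain ⟨s, hps, hrs⟩ : ∃ s, ¬ p ∣ s ∧ s * p ^ r.factorization p = r :=
    ⟨_, Nat.not_dvd_ordCompl hp hr, (mul_comm _ _).trans (Nat.ordProj_mul_ordCompl_eq_self r p)⟩
  rcases h : r.factorization p with _ | j
  · simp
  have hcop : ∀ γ t, t ∣ s → t.Coprime (p ^ γ) := fun γ t ht =>
    Nat.Coprime.pow_right _ (hp.coprime_iff_not_dvd.2 fun h => hps (h.trans ht)).symm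
  rw [← hrs, h, (hcop _ s dvd_rfl).sum_divisors_mul_eq_sum_sum]
  refine dvd_sum fun y hy => ?_
  have hys := Nat.dvd_of_mem_divisors hy
  have hinner : ∑ x ∈ (p ^ (j + 1)).divisors, μ (s * p ^ (j + 1) / (y * x)) * a (y * x) =
      μ (s / y) * (a (y * p ^ (j + 1)) - a (y * p ^ j)) := by
    rw [Nat.sum_divisors_prime_pow hp,
      ← sum_range_moebius_prime_pow_mul hp j fun β => a (y * p ^ β), mul_sum]
    refine sum_congr rfl fun β hβ => ?_
    have hβ : β ≤ j + 1 := Nat.lt_succ_iff.1 (mem_range.1 hβ)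
    rw [Nat.mul_div_mul_comm hys (pow_dvd_pow p hβ), Nat.pow_div hβ hp.pos,
      isMultiplicative_moebius.map_mul_of_coprime (hcop _ _ (Nat.div_dvd_of_dvd hys))]
    ring
  rw [hinner]
  exact (ha y j).mul_left _

theorem sq_dvd_sum_moebius_mul (a : ℕ → ℤ)
    (ha : ∀ p m j : ℕ, p.Prime →
      ((p : ℤ) ^ (j + 1)) ^ 2 ∣ a (m * p ^ (j + 1)) - a (m * p ^ j))
    (r : ℕ) : (r : ℤ) ^ 2 ∣ ∑ d ∈ r.divisors, μ (r / d) * a d := by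
  rcases eq_or_ne r 0 with rfl | hr
  · simp
  rw [← Nat.cast_pow, Int.natCast_dvd, Nat.dvd_iff_prime_pow_dvd_dvd]
  intro p k hp hpk
  have hk : k ≤ r.factorization p * 2 := by
    simpa [Nat.factorization_pow, mul_comm] using
      (hp.pow_dvd_iff_le_factorization (pow_ne_zero 2 hr)).1 hpk
  have hdvd := prime_pow_factorization_sq_dvd_sum_moebius hp a (ha p · · hp) hr
  rw [← pow_mul, ← Nat.cast_pow, Int.natCast_dvd] at hdvd
  exact (pow_dvd_pow p hk).trans hdvd

theorem stmt17_general (p : ℤ) (r : ℕ) :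
    (((r : ℤ) ^ 2) ∣
        ∑ d ∈ r.divisors, (ArithmeticFunction.moebius (r / d) : ℤ) *
          ((3 * d - 1).choose (d - 1) : ℤ)) ∧
      (((r : ℤ) ^ 2) ∣
        ∑ d ∈ r.divisors, (ArithmeticFunction.moebius (r / d) : ℤ) *
          (((2 * p.natAbs + 1) * d - 1).choose (d - 1) : ℤ)) := by
  have h (k : ℕ) (hk : Odd k) :=
    sq_dvd_sum_moebius_mul (fun d => ((k * d - 1).choose (d - 1) : ℤ))
      (fun q m j hq => sq_prime_pow_dvd_choose_sub hq hk m j) r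
  exact ⟨h 3 (by decide), h _ (odd_two_mul_add_one _)⟩

theorem stmt17 (p : ℤ) (hp : p ≤ -1) (r : ℕ) (hr : 1 ≤ r) :
    (((r : ℤ) ^ 2) ∣
        ∑ d ∈ r.divisors, (ArithmeticFunction.moebius (r / d) : ℤ) *
          ((3 * d - 1).choose (d - 1) : ℤ)) ∧
      (((r : ℤ) ^ 2) ∣
        ∑ d ∈ r.divisors, (ArithmeticFunction.moebius (r / d) : ℤ) *
          (((2 * p.natAbs + 1) * d - 1).choose (d - 1) : ℤ)) :=
  stmt17_general p r
end
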